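/- arXiv:2008.02709 — 2 statements merged into one kernel-verified Lean document; each statement's English description precedes it below -/
import Mathlib

section
/- Let Γ be a countable group acting by isometries on a metric space X, μ a probability measure on Γ whose support generates a semigroup containing a Schottky set, and z_0 ∈ X. Then there exist a constant c > 1 and an integer p ∈ ℕ such that for all x, y ∈ [0,∞) and all n, m ∈ ℕ, P(d(z_0, z_{m+n+p}) ≥ x + y − c) ≥ c^{−1}·P(d(z_0,z_m) ≥ x)·P(d(z_0,z_n) ≥ y). -/
open MeasureTheory ProbabilityTheory Filter Topology Pointwise

noncomputable section

namespace BMS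

/-- The Gromov product `(y,z)_x := (d(y,x) + d(z,x) - d(y,z))/2`. -/
def gp {X : Type*} [MetricSpace X] (x y z : X) : ℝ :=
  (dist y x + dist z x - dist y z) / 2

/-- `X` is `δ`-hyperbolic. -/
def HypWith (δ : ℝ) (X : Type*) [MetricSpace X] : Prop :=
  ∀ x₀ x₁ x₂ x₃ : X, min (gp x₀ x₃ x₁) (gp x₀ x₃ x₂) - δ ≤ gp x₀ x₁ x₂

/-- `X` is Gromov-hyperbolic. -/
def GromovHyperbolic (X : Type*) [MetricSpace X] : Prop :=
  ∃ δ : ℝ, 0 < δ ∧ HypWith δ X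

/-- `X` is a geodesic metric space: any two points are joined by an isometrically
parametrized path. -/
def GeodesicSpace (X : Type*) [MetricSpace X] : Prop :=
  ∀ x y : X, ∃ f : ℝ → X, f 0 = x ∧ f (dist x y) = y ∧
    ∀ s ∈ Set.Icc (0 : ℝ) (dist x y), ∀ t ∈ Set.Icc (0 : ℝ) (dist x y),
      dist (f s) (f t) = |s - t|

/-- The action of `Γ` on `X` is by isometries. -/
def IsIsomAction (Γ X : Type*) [Group Γ] [MetricSpace X] [MulAction Γ X] : Prop :=
  ∀ (g : Γ) (x y : X), dist (g • x) (g • y) = dist x y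

/-- The positions of the random walk: `walk ω n = ω 1 * ⋯ * ω n`. -/
def walk {Γ Ω : Type*} [Group Γ] (ω : ℕ → Ω → Γ) : ℕ → Ω → Γ
  | 0 => fun _ => 1
  | n + 1 => fun ρ => walk ω n ρ * ω (n + 1) ρ

/-- Extended-real valued logarithm of an extended nonnegative real, with `elog 0 = ⊥`. -/
def elog (x : ENNReal) : EReal :=
  if x = 0 then ⊥ else ((Real.log x.toReal : ℝ) : EReal)

/-- `(1/n)·log P(Z n ∈ R)`, as an extended real number. -/
def logProbRate {Ω : Type*} [MeasurableSpace Ω] (P : Measure Ω) (Z : ℕ → Ω → ℝ)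
    (R : Set ℝ) (n : ℕ) : EReal :=
  (((n : ℝ)⁻¹ : ℝ) : EReal) * elog (P {ρ | Z n ρ ∈ R})

/-- The sequence of real random variables `Z n` satisfies a (full) large deviation
principle under `P` with rate function `I`. -/
def HasLDP {Ω : Type*} [MeasurableSpace Ω] (P : Measure Ω) (Z : ℕ → Ω → ℝ)
    (I : ℝ → ENNReal) : Prop :=
  LowerSemicontinuous I ∧
  ∀ R : Set ℝ, MeasurableSet R →
    (-(⨅ α ∈ interior R, ((I α : EReal))) ≤ liminf (logProbRate P Z R) atTop ∧
      limsup (logProbRate P Z R) atTop ≤ -(⨅ α ∈ closure R, ((I α : EReal))))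

/-- Weak large deviation principle: the lower bound holds for all measurable sets and
the upper bound for bounded measurable sets. -/
def HasWeakLDP {Ω : Type*} [MeasurableSpace Ω] (P : Measure Ω) (Z : ℕ → Ω → ℝ)
    (I : ℝ → ENNReal) : Prop :=
  LowerSemicontinuous I ∧
  ∀ R : Set ℝ, MeasurableSet R →
    (-(⨅ α ∈ interior R, ((I α : EReal))) ≤ liminf (logProbRate P Z R) atTop ∧
      (Bornology.IsBounded R →
        limsup (logProbRate P Z R) atTop ≤ -(⨅ α ∈ closure R, ((I α : EReal)))))

/-- Convexity of an `[0,∞]`-valued function on `ℝ`. -/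
def ConvexRate (I : ℝ → ENNReal) : Prop :=
  ∀ x y t : ℝ, 0 ≤ t → t ≤ 1 →
    I (t * x + (1 - t) * y) ≤ ENNReal.ofReal t * I x + ENNReal.ofReal (1 - t) * I y

/-- A rate function is proper if its sublevel sets are compact. -/
def ProperRate (I : ℝ → ENNReal) : Prop :=
  ∀ c : ENNReal, c ≠ ⊤ → IsCompact {x : ℝ | I x ≤ c}

/-- The support of a measure on a countable discrete space. -/
def measSupport {Γ : Type*} [MeasurableSpace Γ] (μ : Measure Γ) : Set Γ :=
  {g | μ {g} ≠ 0}

/-- `S` is a Schottky set with respect to the basepoint `z0`. -/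
def IsSchottky {Γ X : Type*} [Group Γ] [MetricSpace X] [MulAction Γ X]
    (z0 : X) (S : Set Γ) : Prop :=
  S.Finite ∧ S.Nonempty ∧ ∃ C : ℝ, 0 < C ∧ ∀ y z : X,
    (2 / 3 : ℝ) * (S.ncard : ℝ) ≤ (({s ∈ S | gp z0 y (s • z) ≤ C} : Set Γ).ncard : ℝ)

/-- `u : ℤ → X` is a quasi-geodesic. -/
def QuasiGeodZ {X : Type*} [MetricSpace X] (u : ℤ → X) : Prop :=
  ∃ lam C : ℝ, 1 ≤ lam ∧ 0 ≤ C ∧ ∀ m n : ℤ,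
    lam⁻¹ * |(m : ℝ) - (n : ℝ)| - C ≤ dist (u m) (u n) ∧
      dist (u m) (u n) ≤ lam * |(m : ℝ) - (n : ℝ)| + C

/-- `g` is a loxodromic isometry: some (equivalently, any) orbit map `n ↦ g^n • x`
is a quasi-geodesic. -/
def IsLoxodromic (X : Type*) {Γ : Type*} [MetricSpace X] [Group Γ] [MulAction Γ X]
    (g : Γ) : Prop :=
  ∃ x : X, QuasiGeodZ (fun n : ℤ => (g ^ n) • x)

/-- The forward (`s = true`) or backward (`s = false`) orbit ray of `g` from `z0`. -/
def raySeq {Γ X : Type*} [Group Γ] [MetricSpace X] [MulAction Γ X]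
    (z0 : X) (g : Γ) (s : Bool) : ℕ → X :=
  fun n => (g ^ (if s then (n : ℤ) else -(n : ℤ))) • z0

/-- Two sequences define the same point of the Gromov boundary. -/
def SameEnd {X : Type*} [MetricSpace X] (z0 : X) (u v : ℕ → X) : Prop :=
  Tendsto (fun n => gp z0 (u n) (v n)) atTop atTop

/-- `g` and `h` are independent loxodromic elements: both are loxodromic and their
four boundary fixed points are pairwise distinct. -/
def IndepLox {Γ X : Type*} [Group Γ] [MetricSpace X] [MulAction Γ X]
    (z0 : X) (g h : Γ) : Prop :=
  IsLoxodromic X g ∧ IsLoxodromic X h ∧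
  (¬ SameEnd z0 (raySeq z0 g true) (raySeq z0 g false)) ∧
  (¬ SameEnd z0 (raySeq z0 h true) (raySeq z0 h false)) ∧
  (∀ s t : Bool, ¬ SameEnd z0 (raySeq z0 g s) (raySeq z0 h t))

/-- A set `B` of isometries is non-elementary: the subsemigroup it generates contains
two independent loxodromic elements. -/
def NonElementarySet {Γ X : Type*} [Group Γ] [MetricSpace X] [MulAction Γ X]
    (z0 : X) (B : Set Γ) : Prop :=
  ∃ g h : Γ, g ∈ Subsemigroup.closure B ∧ h ∈ Subsemigroup.closure B ∧ IndepLox z0 g h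

/-- A probability measure is non-elementary if its support is. -/
def NonElementary {Γ X : Type*} [Group Γ] [MeasurableSpace Γ] [MetricSpace X] [MulAction Γ X]
    (z0 : X) (μ : Measure Γ) : Prop :=
  NonElementarySet z0 (measSupport μ)

/-- The translation length `τ(g) := inf_x d(x, g•x)`. -/
def translationLength (X : Type*) {Γ : Type*} [MetricSpace X] [Group Γ] [MulAction Γ X]
    (g : Γ) : ℝ :=
  ⨅ x : X, dist x (g • x)

/-- The asymptotic (stable) translation length `ℓ(g) = lim_n d(g^n • z0, z0)/n`;
by Fekete's subadditivity lemma the limit equals the infimum over `n ≥ 1`. -/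
def stableLength {Γ X : Type*} [Group Γ] [MetricSpace X] [MulAction Γ X]
    (z0 : X) (g : Γ) : ℝ :=
  ⨅ n : ℕ, dist ((g ^ (n + 1)) • z0) z0 / (n + 1)

/-- `B` is non-arithmetic: some power `B^n` contains two elements with different
asymptotic translation lengths. -/
def NonArithmetic {Γ X : Type*} [Group Γ] [MetricSpace X] [MulAction Γ X]
    (z0 : X) (B : Set Γ) : Prop :=
  ∃ (n : ℕ) (g₁ g₂ : Γ), g₁ ∈ B ^ n ∧ g₂ ∈ B ^ n ∧
    stableLength z0 g₁ ≠ stableLength z0 g₂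

/-- `sup_{g ∈ B^n} d(g•z0, z0)`, valued in `[0,∞]`. -/
def dispSup {Γ X : Type*} [Group Γ] [MetricSpace X] [MulAction Γ X]
    (z0 : X) (B : Set Γ) (n : ℕ) : ENNReal :=
  ⨆ g ∈ B ^ n, ENNReal.ofReal (dist (g • z0) z0)

/-- `inf_{g ∈ B^n} d(g•z0, z0)`, valued in `[0,∞]`. -/
def dispInf {Γ X : Type*} [Group Γ] [MetricSpace X] [MulAction Γ X]
    (z0 : X) (B : Set Γ) (n : ℕ) : ENNReal :=
  ⨅ g ∈ B ^ n, ENNReal.ofReal (dist (g • z0) z0)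

/-- `μ` has a finite exponential moment:
`E[exp (λ·d(z0, ω 1 • z0))] < ∞` for some `λ > 0`. -/
def FiniteExpMoment {Γ Ω X : Type*} [Group Γ] [MetricSpace X] [MulAction Γ X]
    [MeasurableSpace Ω] (P : Measure Ω) (ω : ℕ → Ω → Γ) (z0 : X) : Prop :=
  ∃ lam : ℝ, 0 < lam ∧
    Integrable (fun ρ => Real.exp (lam * dist ((ω 1 ρ) • z0) z0)) P

/-- The increments `ω i` are i.i.d. with common law `μ`. -/
def IIDWalk {Γ Ω : Type*} [Group Γ] [MeasurableSpace Γ] [MeasurableSpace Ω]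
    (P : Measure Ω) (ω : ℕ → Ω → Γ) (μ : Measure Γ) : Prop :=
  (∀ i, Measurable (ω i)) ∧
  iIndepFun (m := fun _ : ℕ => (inferInstance : MeasurableSpace Γ)) ω P ∧
  ∀ i, P.map (ω i) = μ

/-- `-(1/n)·log P(d(z_n, z0) ≤ a·n)`. -/
def belowRate {Γ Ω X : Type*} [Group Γ] [MetricSpace X] [MulAction Γ X]
    [MeasurableSpace Ω] (P : Measure Ω) (ω : ℕ → Ω → Γ) (z0 : X) (a : ℝ) (n : ℕ) : EReal :=
  -((((n : ℝ)⁻¹ : ℝ) : EReal) * elog (P {ρ | dist ((walk ω n ρ) • z0) z0 ≤ a * n}))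

/-- `-(1/n)·log P(d(z_n, z0) ≥ a·n)`. -/
def aboveRate {Γ Ω X : Type*} [Group Γ] [MetricSpace X] [MulAction Γ X]
    [MeasurableSpace Ω] (P : Measure Ω) (ω : ℕ → Ω → Γ) (z0 : X) (a : ℝ) (n : ℕ) : EReal :=
  -((((n : ℝ)⁻¹ : ℝ) : EReal) * elog (P {ρ | a * n ≤ dist ((walk ω n ρ) • z0) z0}))

end BMS

/-!
Write `z_m = γ • z0` and `z_n = η • z0` for two independent blocks of increments. The Schottky
property provides, for every pair `(γ, η)`, some `s ∈ S` with `(γ⁻¹ z0, s η z0)_{z0} ≤ C`, and then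
`d(γ s η z0, z0) ≥ d(γ z0, z0) + d(η z0, z0) - 2C - d(s z0, z0)`. Each `s` is the product of a word
in the support of `μ`; inserting this word between the two blocks, and padding with a fixed letter
of positive mass so that every insertion has the same length `p`, costs a bounded factor of
probability, and a union bound over the finitely many `s ∈ S` concludes.
-/

theorem MeasureTheory.Measure.pi_setOf_inl_mem_and_inr_mem {ι κ : Type*} [Fintype ι] [Fintype κ]
    {α : ι ⊕ κ → Type*} [∀ i, MeasurableSpace (α i)] (ν : ∀ i, Measure (α i))
    [∀ i, SigmaFinite (ν i)] (A : Set (∀ i, α (.inl i))) (B : Set (∀ j, α (.inr j))) :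
    Measure.pi ν {w | (fun i => w (.inl i)) ∈ A ∧ (fun j => w (.inr j)) ∈ B}
      = Measure.pi (fun i => ν (.inl i)) A * Measure.pi (fun j => ν (.inr j)) B := by
  rw [← Measure.prod_prod]
  exact (measurePreserving_sumPiEquivProdPi ν).measure_preimage_equiv (A ×ˢ B)

namespace BMS

open scoped ENNReal

section Walk

variable {Γ Ω : Type*} [Group Γ]

theorem walk_add (ω : ℕ → Ω → Γ) (a b : ℕ) (ρ : Ω) :
    walk ω (a + b) ρ = walk ω a ρ * (List.ofFn fun i : Fin b => ω (a + i + 1) ρ).prod := by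
  induction b with
  | zero => simp
  | succ b ih =>
    rw [← add_assoc]
    simp only [walk]
    rw [ih, List.ofFn_succ', List.prod_concat, mul_assoc]
    simp [add_assoc]

theorem walk_eq_prod_ofFn (ω : ℕ → Ω → Γ) (n : ℕ) (ρ : Ω) :
    walk ω n ρ = (List.ofFn fun i : Fin n => ω (i + 1) ρ).prod := by
  simpa [walk] using walk_add ω 0 n ρ

end Walk

section IID

variable {Γ Ω : Type*} [Group Γ] [MeasurableSpace Γ] [MeasurableSpace Ω]
  {P : Measure Ω} {ω : ℕ → Ω → Γ} {μ : Measure Γ}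

theorem IIDWalk.map_eq_pi (hw : IIDWalk P ω μ) {ι : Type*} [Fintype ι] {τ : ι → ℕ}
    (hτ : τ.Injective) : P.map (fun ρ i => ω (τ i) ρ) = Measure.pi fun _ => μ := by
  rw [(hw.2.1.precomp hτ).map_fun_eq_pi_map fun i => (hw.1 (τ i)).aemeasurable]
  simp only [hw.2.2]

variable [Countable Γ] [MeasurableSingletonClass Γ]

theorem IIDWalk.measure_eq_pi (hw : IIDWalk P ω μ) {ι : Type*} [Fintype ι] {τ : ι → ℕ}
    (hτ : τ.Injective) (E : Set (ι → Γ)) :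
    P {ρ | (fun i => ω (τ i) ρ) ∈ E} = Measure.pi (fun _ => μ) E := by
  rw [← hw.map_eq_pi hτ, Measure.map_apply (measurable_pi_lambda _ fun i => hw.1 (τ i))
    (.of_discrete)]
  rfl

theorem IIDWalk.measure_walk_mem (hw : IIDWalk P ω μ) (n : ℕ) (E : Set Γ) :
    P {ρ | walk ω n ρ ∈ E} = Measure.pi (fun _ : Fin n => μ) {v | (List.ofFn v).prod ∈ E} := by
  simp_rw [walk_eq_prod_ofFn]
  exact hw.measure_eq_pi (τ := fun i : Fin n => i + 1) (fun i j h => Fin.ext (by simpa using h))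
    {v | (List.ofFn v).prod ∈ E}

theorem IIDWalk.measure_mem_and_eq [SigmaFinite μ] (hw : IIDWalk P ω μ) {ι κ : Type*}
    [Fintype ι] [Fintype κ] {τ : ι ⊕ κ → ℕ} (hτ : τ.Injective) (A : Set (ι → Γ)) (f : κ → Γ) :
    P {ρ | (fun i => ω (τ (.inl i)) ρ) ∈ A ∧ (fun j => ω (τ (.inr j)) ρ) = f}
      = Measure.pi (fun _ => μ) A * ∏ j, μ {f j} := by
  rw [← Measure.pi_singleton, ← Measure.pi_setOf_inl_mem_and_inr_mem (fun _ : ι ⊕ κ => μ)]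
  exact hw.measure_eq_pi hτ
    {w | (fun i => w (.inl i)) ∈ A ∧ (fun j => w (.inr j)) ∈ ({f} : Set (κ → Γ))}

end IID

section Words

variable {Γ : Type*} [MeasurableSpace Γ]

def wordProb (μ : Measure Γ) (l : List Γ) : ℝ≥0∞ :=
  (l.map fun g => μ {g}).prod

theorem wordProb_ne_zero {μ : Measure Γ} {l : List Γ} (hl : ∀ g ∈ l, g ∈ measSupport μ) :
    wordProb μ l ≠ 0 :=
  List.prod_ne_zero fun h0 => by
    obtain ⟨g, hg, hzero⟩ := List.mem_map.1 h0
    exact hl g hg hzero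

variable [Countable Γ]

theorem measSupport_nonempty (μ : Measure Γ) [NeZero μ] : (measSupport μ).Nonempty := by
  by_contra h
  refine NeZero.ne μ (Measure.ext_of_singleton fun g => ?_)
  simpa [measSupport] using fun hg : μ {g} ≠ 0 => h ⟨g, hg⟩

theorem exists_padded_words [Monoid Γ] (μ : Measure Γ) [NeZero μ] (T : Finset Γ)
    (hT : ∀ s ∈ T, s ∈ Subsemigroup.closure (measSupport μ)) :
    ∃ (p : ℕ) (u v : Γ → List Γ), ∀ s ∈ T, (u s).prod = s ∧ (u s).length + (v s).length = p ∧
      wordProb μ (u s) ≠ 0 ∧ wordProb μ (v s) ≠ 0 := by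
  choose! u hu using fun s hs => Submonoid.exists_list_of_mem_closure
    (Subsemigroup.closure_le.2 Submonoid.subset_closure (hT s hs))
  obtain ⟨g0, hg0⟩ := measSupport_nonempty μ
  set p := T.sup fun s => (u s).length
  refine ⟨p, u, fun s => List.replicate (p - (u s).length) g0, fun s hs => ⟨(hu s hs).2, ?_,
    wordProb_ne_zero (hu s hs).1, wordProb_ne_zero fun g hg => ?_⟩⟩
  · have : (u s).length ≤ p := Finset.le_sup (f := fun s => (u s).length) hs
    simp only [List.length_replicate]
    omega
  · rwa [List.eq_of_mem_replicate hg]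

end Words

section Isometric

variable {Γ X : Type*} [Group Γ] [MetricSpace X] [MulAction Γ X]

theorem gp_le_dist_left (x y z : X) : gp x y z ≤ dist y x := by
  unfold gp
  linarith [dist_triangle z y x, dist_comm y z]

theorem gp_le_dist_right (x y z : X) : gp x y z ≤ dist z x := by
  unfold gp
  linarith [dist_triangle y z x]

theorem IsIsomAction.dist_inv_smul (hiso : IsIsomAction Γ X) (z0 : X) (g : Γ) :
    dist (g⁻¹ • z0) z0 = dist (g • z0) z0 := by
  rw [← hiso g, smul_inv_smul, dist_comm]

theorem IsIsomAction.dist_mul_smul (hiso : IsIsomAction Γ X) (z0 : X) (g h : Γ) :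
    dist ((g * h) • z0) z0
      = dist (g • z0) z0 + dist (h • z0) z0 - 2 * gp z0 (g⁻¹ • z0) (h • z0) := by
  have hmove : dist ((g * h) • z0) z0 = dist (h • z0) (g⁻¹ • z0) := by
    rw [← hiso g⁻¹, ← mul_smul, inv_mul_cancel_left]
  rw [hmove, ← hiso.dist_inv_smul z0 g, gp, dist_comm (g⁻¹ • z0) (h • z0)]
  ring

theorem IsIsomAction.sub_le_dist_mul_smul_left (hiso : IsIsomAction Γ X) (z0 : X) (g h : Γ) :
    dist (g • z0) z0 - dist (h • z0) z0 ≤ dist ((g * h) • z0) z0 := by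
  linarith [hiso.dist_mul_smul z0 g h, gp_le_dist_right z0 (g⁻¹ • z0) (h • z0)]

theorem IsIsomAction.sub_le_dist_mul_smul_right (hiso : IsIsomAction Γ X) (z0 : X) (g h : Γ) :
    dist (h • z0) z0 - dist (g • z0) z0 ≤ dist ((g * h) • z0) z0 := by
  linarith [hiso.dist_mul_smul z0 g h, gp_le_dist_left z0 (g⁻¹ • z0) (h • z0),
    hiso.dist_inv_smul z0 g]

theorem IsIsomAction.add_sub_le_dist_mul_smul (hiso : IsIsomAction Γ X) (z0 : X)
    {C x y : ℝ} {g h : Γ} (s t : Γ) (hg : x ≤ dist (g • z0) z0) (hh : y ≤ dist (h • z0) z0)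
    (hgp : gp z0 (g⁻¹ • z0) ((s * h) • z0) ≤ C) :
    x + y - (2 * C + dist (s • z0) z0 + dist (t • z0) z0) ≤ dist ((g * s * h * t) • z0) z0 := by
  have h1 := hiso.dist_mul_smul z0 g (s * h)
  have h2 := hiso.sub_le_dist_mul_smul_right z0 s h
  have h3 := hiso.sub_le_dist_mul_smul_left z0 (g * s * h) t
  rw [mul_assoc g s h] at h3 ⊢
  linarith

end Isometric

section Insertion

variable {Γ Ω : Type*} [Group Γ] [Countable Γ] [MeasurableSpace Γ] [MeasurableSingletonClass Γ]
  [MeasurableSpace Ω] {P : Measure Ω} {ω : ℕ → Ω → Γ} {μ : Measure Γ} [SigmaFinite μ]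

def blockProds (m n : ℕ) (w : Fin m ⊕ Fin n → Γ) : Γ × Γ :=
  ((List.ofFn fun i => w (.inl i)).prod, (List.ofFn fun j => w (.inr j)).prod)

theorem IIDWalk.measure_blockProds_preimage_prod (hw : IIDWalk P ω μ) (m n : ℕ) (A B : Set Γ) :
    Measure.pi (fun _ : Fin m ⊕ Fin n => μ) (blockProds m n ⁻¹' (A ×ˢ B))
      = P {ρ | walk ω m ρ ∈ A} * P {ρ | walk ω n ρ ∈ B} := by
  rw [hw.measure_walk_mem, hw.measure_walk_mem]
  exact Measure.pi_setOf_inl_mem_and_inr_mem (fun _ : Fin m ⊕ Fin n => μ)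
    {v | (List.ofFn v).prod ∈ A} {v | (List.ofFn v).prod ∈ B}

theorem IIDWalk.measure_blockProds_preimage_mul_le (hw : IIDWalk P ω μ) {m n : ℕ}
    (G : Set (Γ × Γ)) (u v : List Γ) :
    Measure.pi (fun _ : Fin m ⊕ Fin n => μ) (blockProds m n ⁻¹' G)
        * (wordProb μ u * wordProb μ v)
      ≤ P {ρ | ∃ q ∈ G, walk ω (m + u.length + n + v.length) ρ = q.1 * u.prod * q.2 * v.prod} := by
  set k := u.length
  set j := v.length
  -- the increments are laid out as: first block, word `u`, second block, word `v`
  let τ : (Fin m ⊕ Fin n) ⊕ (Fin k ⊕ Fin j) → ℕ :=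
    Sum.elim (Sum.elim (fun i => i + 1) (fun i => m + k + i + 1))
      (Sum.elim (fun i => m + i + 1) (fun i => m + k + n + i + 1))
  have hτ : τ.Injective := by
    rintro ((a | a) | a | a) ((b | b) | b | b) h <;>
      simp only [τ, Sum.elim_inl, Sum.elim_inr, Sum.inl.injEq, Sum.inr.injEq, reduceCtorEq,
        Fin.ext_iff] at h ⊢ <;> omega
  have hweight : ∏ i, μ {Sum.elim u.get v.get i} = wordProb μ u * wordProb μ v := by
    rw [Fintype.prod_sum_type]
    exact congrArg₂ (· * ·) (Fin.prod_univ_fun_getElem u fun g => μ {g})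
      (Fin.prod_univ_fun_getElem v fun g => μ {g})
  rw [← hweight, ← hw.measure_mem_and_eq hτ]
  refine measure_mono fun ρ ⟨hG, hfix⟩ => ⟨_, hG, ?_⟩
  have hu : (List.ofFn fun i : Fin k => ω (m + i + 1) ρ) = u := by
    conv_rhs => rw [← List.ofFn_get u]
    exact congrArg List.ofFn (funext fun i => congrFun hfix (.inl i))
  have hv : (List.ofFn fun i : Fin j => ω (m + k + n + i + 1) ρ) = v := by
    conv_rhs => rw [← List.ofFn_get v]
    exact congrArg List.ofFn (funext fun i => congrFun hfix (.inr i))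
  rw [walk_add, walk_add, walk_add, walk_eq_prod_ofFn, hu, hv]
  rfl

end Insertion

theorem IsSchottky.exists_gp_le {Γ X : Type*} [Group Γ] [MetricSpace X] [MulAction Γ X]
    {z0 : X} {S : Set Γ} (hS : IsSchottky z0 S) :
    ∃ C : ℝ, ∀ y z : X, ∃ s ∈ S, gp z0 y (s • z) ≤ C := by
  obtain ⟨hfin, hne, C, -, hC⟩ := hS
  refine ⟨C, fun y z => Set.nonempty_of_ncard_ne_zero (s := {s ∈ S | gp z0 y (s • z) ≤ C})
    fun h0 => ?_⟩
  have hpos : (0 : ℝ) < S.ncard := by exact_mod_cast (Set.ncard_pos hfin).2 hne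
  have := hC y z
  rw [h0, Nat.cast_zero] at this
  linarith

theorem exists_one_lt_ofReal_inv_le (K : ℝ) {β : ℝ≥0∞} (hβ : β ≠ 0) :
    ∃ c : ℝ, 1 < c ∧ K ≤ c ∧ ENNReal.ofReal c⁻¹ ≤ β := by
  refine ⟨max (max 2 K) β.toReal⁻¹, ?_, (le_max_right _ _).trans (le_max_left _ _), ?_⟩
  · exact one_lt_two.trans_le ((le_max_left _ _).trans (le_max_left _ _))
  rcases eq_or_ne β ⊤ with rfl | hβtop
  · exact le_top
  rw [ENNReal.ofReal_le_iff_le_toReal hβtop]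
  exact inv_le_of_inv_le₀ (ENNReal.toReal_pos hβ hβtop) (le_max_right _ _)

section Supermultiplicativity

variable {Γ Ω X : Type*} [Group Γ] [Countable Γ] [MeasurableSpace Γ] [MeasurableSingletonClass Γ]
  [MeasurableSpace Ω] {P : Measure Ω} {ω : ℕ → Ω → Γ} {μ : Measure Γ} [SigmaFinite μ]
  [MetricSpace X] [MulAction Γ X]

theorem IIDWalk.measure_mul_measure_le (hw : IIDWalk P ω μ) (hiso : IsIsomAction Γ X) (z0 : X)
    {T : Finset Γ} {C : ℝ} (hT : ∀ y z : X, ∃ s ∈ T, gp z0 y (s • z) ≤ C)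
    {p : ℕ} {u v : Γ → List Γ} (huv : ∀ s ∈ T, (u s).prod = s ∧ (u s).length + (v s).length = p)
    {K : ℝ} (hK : ∀ s ∈ T, 2 * C + dist (s • z0) z0 + dist ((v s).prod • z0) z0 ≤ K)
    {α : ℝ≥0∞} (hα : ∀ s ∈ T, α ≤ wordProb μ (u s) * wordProb μ (v s)) (x y : ℝ) (m n : ℕ) :
    α * (P {ρ | x ≤ dist (walk ω m ρ • z0) z0} * P {ρ | y ≤ dist (walk ω n ρ • z0) z0})
      ≤ T.card * P {ρ | x + y - K ≤ dist (walk ω (m + n + p) ρ • z0) z0} := by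
  set A := {g : Γ | x ≤ dist (g • z0) z0}
  set B := {g : Γ | y ≤ dist (g • z0) z0}
  let G : Γ → Set (Γ × Γ) := fun s =>
    {q | q.1 ∈ A ∧ q.2 ∈ B ∧ gp z0 (q.1⁻¹ • z0) ((s * q.2) • z0) ≤ C}
  have hcover : blockProds m n ⁻¹' (A ×ˢ B) ⊆ ⋃ s ∈ T, blockProds m n ⁻¹' G s := by
    rintro w ⟨hA, hB⟩
    obtain ⟨s, hs, hgp⟩ := hT ((blockProds m n w).1⁻¹ • z0) ((blockProds m n w).2 • z0)
    exact Set.mem_biUnion hs ⟨hA, hB, by rwa [mul_smul]⟩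
  have hinsert : ∀ s ∈ T, Measure.pi (fun _ => μ) (blockProds m n ⁻¹' G s) * α
      ≤ P {ρ | x + y - K ≤ dist (walk ω (m + n + p) ρ • z0) z0} := by
    intro s hs
    obtain ⟨hprod, hlen⟩ := huv s hs
    have hlen' : m + (u s).length + n + (v s).length = m + n + p := by omega
    calc _ ≤ Measure.pi (fun _ => μ) (blockProds m n ⁻¹' G s)
          * (wordProb μ (u s) * wordProb μ (v s)) := by gcongr; exact hα s hs
      _ ≤ _ := hw.measure_blockProds_preimage_mul_le (G s) (u s) (v s)
      _ ≤ _ := by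
        rw [hlen']
        refine measure_mono fun ρ ⟨q, ⟨hq1, hq2, hgp⟩, hwalk⟩ => ?_
        have hdist := hiso.add_sub_le_dist_mul_smul z0 s (v s).prod hq1 hq2 hgp
        show x + y - K ≤ dist (walk ω (m + n + p) ρ • z0) z0
        rw [hwalk, hprod]
        linarith [hK s hs]
  calc _ = Measure.pi (fun _ => μ) (blockProds m n ⁻¹' (A ×ˢ B)) * α := by
        rw [hw.measure_blockProds_preimage_prod, mul_comm]
        rfl
    _ ≤ (∑ s ∈ T, Measure.pi (fun _ => μ) (blockProds m n ⁻¹' G s)) * α := by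
        gcongr
        exact (measure_mono hcover).trans (measure_biUnion_finset_le _ _)
    _ ≤ ∑ _s ∈ T, P {ρ | x + y - K ≤ dist (walk ω (m + n + p) ρ • z0) z0} := by
        rw [Finset.sum_mul]
        exact Finset.sum_le_sum hinsert
    _ = _ := by rw [Finset.sum_const, nsmul_eq_mul]

theorem IIDWalk.exists_supermultiplicative (hw : IIDWalk P ω μ) (hiso : IsIsomAction Γ X)
    (z0 : X) {T : Finset Γ} {C : ℝ} (hT : ∀ y z : X, ∃ s ∈ T, gp z0 y (s • z) ≤ C)
    {p : ℕ} {u v : Γ → List Γ}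
    (huv : ∀ s ∈ T, (u s).prod = s ∧ (u s).length + (v s).length = p ∧
      wordProb μ (u s) ≠ 0 ∧ wordProb μ (v s) ≠ 0) :
    ∃ c : ℝ, 1 < c ∧ ∀ (x y : ℝ) (n m : ℕ),
      ENNReal.ofReal c⁻¹ * P {ρ | x ≤ dist (walk ω m ρ • z0) z0}
          * P {ρ | y ≤ dist (walk ω n ρ • z0) z0}
        ≤ P {ρ | x + y - c ≤ dist (walk ω (m + n + p) ρ • z0) z0} := by
  obtain ⟨K, hK⟩ :=
    (T.image fun s => 2 * C + dist (s • z0) z0 + dist ((v s).prod • z0) z0).exists_le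
  set α := T.inf fun s => wordProb μ (u s) * wordProb μ (v s)
  have hα : α ≠ 0 := ((Finset.lt_inf_iff ENNReal.zero_lt_top).2 fun s hs =>
    pos_iff_ne_zero.2 (mul_ne_zero (huv s hs).2.2.1 (huv s hs).2.2.2)).ne'
  obtain ⟨c, hc1, hKc, hcα⟩ :=
    exists_one_lt_ofReal_inv_le K (ENNReal.div_ne_zero.2 ⟨hα, ENNReal.natCast_ne_top T.card⟩)
  refine ⟨c, hc1, fun x y n m => ?_⟩
  have hbound := hw.measure_mul_measure_le hiso z0 hT
    (fun s hs => ⟨(huv s hs).1, (huv s hs).2.1⟩) (fun s hs => hK _ (Finset.mem_image_of_mem _ hs))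
    (fun s hs => Finset.inf_le hs) x y m n
  calc _ ≤ α / T.card * (P {ρ | x ≤ dist (walk ω m ρ • z0) z0}
          * P {ρ | y ≤ dist (walk ω n ρ • z0) z0}) := by
        rw [mul_assoc]
        gcongr
    _ ≤ P {ρ | x + y - K ≤ dist (walk ω (m + n + p) ρ • z0) z0} := by
        rw [div_eq_mul_inv, mul_right_comm, ← div_eq_mul_inv]
        exact ENNReal.div_le_of_le_mul' hbound
    _ ≤ _ := measure_mono fun ρ (hρ : x + y - K ≤ _) => show x + y - c ≤ _ by linarith

end Supermultiplicativity

theorem insertion_supermultiplicativity_general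
    {X : Type*} [MetricSpace X] {Γ : Type*} [Group Γ] [Countable Γ]
    [MeasurableSpace Γ] [MeasurableSingletonClass Γ] [MulAction Γ X]
    (hiso : IsIsomAction Γ X) (z0 : X)
    (μ : Measure Γ) [IsProbabilityMeasure μ]
    (hS : ∃ S : Set Γ, S ⊆ (Subsemigroup.closure (measSupport μ) : Set Γ) ∧ IsSchottky z0 S)
    {Ω : Type*} [MeasurableSpace Ω] (P : Measure Ω)
    (ω : ℕ → Ω → Γ) (hwalk : IIDWalk P ω μ) :
    ∃ (c : ℝ) (p : ℕ), 1 < c ∧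
      ∀ x y : ℝ, 0 ≤ x → 0 ≤ y → ∀ n m : ℕ,
        ENNReal.ofReal c⁻¹ *
            P {ρ | x ≤ dist ((walk ω m ρ) • z0) z0} *
            P {ρ | y ≤ dist ((walk ω n ρ) • z0) z0} ≤
          P {ρ | x + y - c ≤ dist ((walk ω (m + n + p) ρ) • z0) z0} := by
  obtain ⟨S, hSsub, hSch⟩ := hS
  obtain ⟨C, hC⟩ := hSch.exists_gp_le
  obtain ⟨p, u, v, huv⟩ :=
    exists_padded_words μ hSch.1.toFinset fun s hs => hSsub (hSch.1.mem_toFinset.1 hs)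
  obtain ⟨c, hc1, hc⟩ := hwalk.exists_supermultiplicative hiso z0
    (fun y z => by simpa using hC y z) huv
  exact ⟨c, p, hc1, fun x y _ _ n m => hc x y n m⟩

/-- **Proposition (supermultiplicativity for deviations from above).** If the semigroup
generated by the support of `μ` contains a Schottky set, there are `c > 1` and `p ∈ ℕ`
such that for all `x, y ≥ 0` and `n, m ∈ ℕ`,
`P(d(z0, z_{m+n+p}) ≥ x + y - c) ≥ c⁻¹ P(d(z0,z_m) ≥ x) P(d(z0,z_n) ≥ y)`. -/
theorem insertion_supermultiplicativity
    {X : Type*} [MetricSpace X] {Γ : Type*} [Group Γ] [Countable Γ]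
    [MeasurableSpace Γ] [MeasurableSingletonClass Γ] [MulAction Γ X]
    (hiso : IsIsomAction Γ X) (z0 : X)
    (μ : Measure Γ) [IsProbabilityMeasure μ]
    (hS : ∃ S : Set Γ, S ⊆ (Subsemigroup.closure (measSupport μ) : Set Γ) ∧ IsSchottky z0 S)
    {Ω : Type*} [MeasurableSpace Ω] (P : Measure Ω) [IsProbabilityMeasure P]
    (ω : ℕ → Ω → Γ) (hwalk : IIDWalk P ω μ) :
    ∃ (c : ℝ) (p : ℕ), 1 < c ∧
      ∀ x y : ℝ, 0 ≤ x → 0 ≤ y → ∀ n m : ℕ,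
        ENNReal.ofReal c⁻¹ *
            P {ρ | x ≤ dist ((walk ω m ρ) • z0) z0} *
            P {ρ | y ≤ dist ((walk ω n ρ) • z0) z0} ≤
          P {ρ | x + y - c ≤ dist ((walk ω (m + n + p) ρ) • z0) z0} :=
  insertion_supermultiplicativity_general hiso z0 μ hS P ω hwalk

end BMS
end
end

section
/- (Geometric Berger–Wang equality, non-elementary case.) Let X be a geodesic Gromov-hyperbolic metric space and let B be a non-elementary subset of Isom(X). Then ℓ_∞(B) = ℓ(B), where ℓ_∞(B) := limsup_{k→∞} sup_{g∈B^k} ℓ(g)/k and ℓ(B) is the asymptotic joint displacement. -/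
open MeasureTheory ProbabilityTheory Filter Topology Pointwise

noncomputable section

/-!
Two independent loxodromics in the semigroup generated by `B` have high powers `G`, `H` such
that `G`, `H`, `G * H`, `H * G` play ping-pong: for every long `w` one of them, `s`, makes the
orbit of the periodic word `w s w s ⋯` a chain with long steps and small Gromov products at the
junctions. In a hyperbolic space such a chain is a quasi-geodesic, so `ℓ(w s) ≥ |w| - c`. Hence
an element of `B ^ k` of nearly maximal displacement yields an element of `B ^ (k + j)`,
`j ≤ m`, with nearly the same translation length, and `ℓ_∞(B)` dominates the upper rate of
joint displacement. Conversely, padding the powers of a single `a ∈ B ^ k` by a fixed element of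
`B` bounds the lower rate of joint displacement below by `ℓ(a) / k`, so the rate converges, and
its limit is `ℓ_∞(B)`.
-/

namespace BMS

section GromovProduct

variable {X : Type*} [MetricSpace X]

lemma gp_comm (x y z : X) : gp x y z = gp x z y := by
  unfold gp; rw [dist_comm y z]; ring

lemma gp_nonneg (x y z : X) : 0 ≤ gp x y z := by
  have := dist_triangle y x z
  unfold gp; rw [dist_comm x z] at this; linarith

lemma gp_self_left (x z : X) : gp x x z = 0 := by
  simp [gp, dist_comm]

lemma gp_self_right (x y : X) : gp x y y = dist y x := by
  simp [gp]

lemma gp_add_gp (x y z : X) : gp y x z + gp x y z = dist x y := by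
  unfold gp; rw [dist_comm y x, dist_comm z y, dist_comm z x]; ring

lemma gp_le_gp_add_dist (x y z z' : X) : gp x y z' ≤ gp x y z + dist z z' := by
  have h₁ := dist_triangle z' z x
  have h₂ := dist_triangle y z' z
  unfold gp; rw [dist_comm z' z] at h₁ h₂; linarith

variable {δ : ℝ}

lemma HypWith.nonneg (hyp : HypWith δ X) (x : X) : 0 ≤ δ := by
  simpa [gp_self_left] using hyp x x x x

lemma HypWith.gp_le_of_lt (hyp : HypWith δ X) {p a b c : X} {T : ℝ} (hab : gp p a b ≤ T)
    (hcb : T + δ < gp p c b) : gp p c a ≤ T + δ := by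
  have := hyp p a b c
  by_contra! h
  have := lt_min h hcb
  linarith

lemma HypWith.gp_le_or_gp_le (hyp : HypWith δ X) {p u₁ u₂ v₁ v₂ : X} {C : ℝ}
    (h₁₁ : gp p u₁ v₁ ≤ C - δ) (h₁₂ : gp p u₁ v₂ ≤ C - δ)
    (h₂₁ : gp p u₂ v₁ ≤ C - δ) (h₂₂ : gp p u₂ v₂ ≤ C - δ) (y : X) :
    (gp p y u₁ ≤ C ∧ gp p y u₂ ≤ C) ∨ (gp p y v₁ ≤ C ∧ gp p y v₂ ≤ C) := by
  have key : ∀ {u v : X}, gp p u v ≤ C - δ → C < gp p y u → gp p y v ≤ C := by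
    intro u v huv hyu
    simpa using hyp.gp_le_of_lt (by rwa [gp_comm] at huv) (by linarith : C - δ + δ < gp p y u)
  by_cases hu₁ : C < gp p y u₁
  · exact .inr ⟨key h₁₁ hu₁, key h₁₂ hu₁⟩
  by_cases hu₂ : C < gp p y u₂
  · exact .inr ⟨key h₂₁ hu₂, key h₂₂ hu₂⟩
  exact .inl ⟨not_lt.1 hu₁, not_lt.1 hu₂⟩

end GromovProduct

section Chain

variable {X : Type*} [MetricSpace X]

/-- In a `δ`-hyperbolic space a chain is a quasi-geodesic (`IsChain.sum_dist_sub_le`). -/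
structure IsChain (δ K : ℝ) (x : ℕ → X) (n : ℕ) : Prop where
  gp_le : ∀ i, i + 2 ≤ n → gp (x (i + 1)) (x i) (x (i + 2)) ≤ K
  le_dist : ∀ i, i + 1 ≤ n → 2 * K + 4 * δ + 1 ≤ dist (x i) (x (i + 1))

namespace IsChain

variable {δ K : ℝ} {x : ℕ → X} {n : ℕ}

lemma mono (h : IsChain δ K x n) {m : ℕ} (hm : m ≤ n) : IsChain δ K x m :=
  ⟨fun i hi => h.gp_le i (by omega), fun i hi => h.le_dist i (by omega)⟩

lemma shift (h : IsChain δ K x n) (i : ℕ) : IsChain δ K (fun t => x (i + t)) (n - i) where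
  gp_le t ht := by simpa only [← add_assoc] using h.gp_le (i + t) (by omega)
  le_dist t ht := by simpa only [← add_assoc] using h.le_dist (i + t) (by omega)

lemma reverse (h : IsChain δ K x n) : IsChain δ K (fun t => x (n - t)) n where
  gp_le t ht := by
    obtain ⟨m, rfl⟩ : ∃ m, n = m + t + 2 := ⟨n - t - 2, by omega⟩
    have e₁ : m + t + 2 - (t + 1) = m + 1 := by omega
    have e₂ : m + t + 2 - t = m + 2 := by omega
    have e₃ : m + t + 2 - (t + 2) = m := by omega
    simpa only [e₁, e₂, e₃, gp_comm] using h.gp_le m (by omega)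
  le_dist t ht := by
    obtain ⟨m, rfl⟩ : ∃ m, n = m + t + 1 := ⟨n - t - 1, by omega⟩
    have e₁ : m + t + 1 - t = m + 1 := by omega
    have e₂ : m + t + 1 - (t + 1) = m := by omega
    simpa only [e₁, e₂, dist_comm] using h.le_dist m (by omega)

lemma gp_succ_le (hyp : HypWith δ X) (h : IsChain δ K x n) {j : ℕ} (hj : 1 ≤ j)
    (hjn : j + 1 ≤ n) : gp (x j) (x 0) (x (j + 1)) ≤ K + δ := by
  have hδ := hyp.nonneg (x 0)
  induction j, hj using Nat.le_induction with
  | base => linarith [h.gp_le 0 (by omega)]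
  | succ j hj ih =>
    have ih := ih (by omega)
    have hstep := h.le_dist j (by omega)
    -- seen from `x (j + 1)`, the points `x 0` and `x j` lie in the same direction
    have hfar : K + δ < gp (x (j + 1)) (x 0) (x j) := by
      unfold gp at ih ⊢
      rw [dist_comm (x (j + 1)) (x j)] at ih
      linarith
    exact hyp.gp_le_of_lt (by rw [gp_comm]; exact h.gp_le j (by omega)) hfar

lemma dist_add_dist_sub_le (hyp : HypWith δ X) (h : IsChain δ K x n) (hK : 0 ≤ K) {j : ℕ}
    (hj : j + 1 ≤ n) :
    dist (x 0) (x j) + dist (x j) (x (j + 1)) - 2 * (K + δ) ≤ dist (x 0) (x (j + 1)) := by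
  rcases Nat.eq_zero_or_pos j with rfl | hj₀
  · simp only [dist_self, zero_add]
    linarith [hyp.nonneg (x 0)]
  · have := h.gp_succ_le hyp hj₀ hj
    unfold gp at this
    rw [dist_comm (x (j + 1)) (x j)] at this
    linarith

lemma sum_dist_sub_le (hyp : HypWith δ X) (h : IsChain δ K x n) (hK : 0 ≤ K) {j : ℕ}
    (hj : j ≤ n) :
    ∑ i ∈ Finset.range j, dist (x i) (x (i + 1)) - 2 * j * (K + δ) ≤ dist (x 0) (x j) := by
  induction j with
  | zero => simp
  | succ j ih =>
    have := h.dist_add_dist_sub_le hyp hK (j := j) hj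
    rw [Finset.sum_range_succ]
    push_cast
    linarith [ih (by omega)]

lemma gp_le_of_lt (hyp : HypWith δ X) (h : IsChain δ K x n) {i j k : ℕ} (hij : i < j)
    (hjk : j < k) (hkn : k ≤ n) : gp (x j) (x i) (x k) ≤ K + 2 * δ := by
  have hleft : gp (x j) (x i) (x (j + 1)) ≤ K + δ := by
    have e₁ : i + (j - i) = j := by omega
    have e₂ : i + (j - i + 1) = j + 1 := by omega
    simpa only [add_zero, e₁, e₂] using
      (h.shift i).gp_succ_le hyp (j := j - i) (by omega) (by omega)
  rcases (show j + 1 = k ∨ j + 1 < k by omega) with rfl | hlt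
  · linarith [hyp.nonneg (x 0)]
  have hright : gp (x (j + 1)) (x k) (x j) ≤ K + δ := by
    have e₁ : k - (k - (j + 1)) = j + 1 := by omega
    have e₂ : k - (k - (j + 1) + 1) = j := by omega
    simpa only [Nat.sub_zero, e₁, e₂] using
      ((h.mono hkn).reverse).gp_succ_le hyp (j := k - (j + 1)) (by omega) (by omega)
  -- seen from `x j`, the points `x (j + 1)` and `x k` lie in the same direction
  have hfar : K + δ + δ < gp (x j) (x k) (x (j + 1)) := by
    have hsum := gp_add_gp (x (j + 1)) (x j) (x k)
    rw [gp_comm (x (j + 1)), gp_comm (x j), dist_comm] at hsum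
    linarith [h.le_dist j (by omega), hyp.nonneg (x 0)]
  have := hyp.gp_le_of_lt hleft hfar
  rw [gp_comm]
  linarith

end IsChain

end Chain

section Orbit

variable {X : Type*} [MetricSpace X] {Γ : Type*} [Group Γ] [MulAction Γ X]

lemma IsIsomAction.isIsometricSMul (h : IsIsomAction Γ X) : IsIsometricSMul Γ X :=
  ⟨fun g => Isometry.of_dist_eq (h g)⟩

def displacement (z0 : X) (g : Γ) : ℝ := dist (g • z0) z0

variable (z0 : X)

lemma displacement_nonneg (g : Γ) : 0 ≤ displacement z0 g := dist_nonneg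

@[simp] lemma displacement_one : displacement z0 (1 : Γ) = 0 := by simp [displacement]

lemma stableLength_le_div (g : Γ) (n : ℕ) :
    stableLength z0 g ≤ displacement z0 (g ^ (n + 1)) / (n + 1) :=
  ciInf_le ⟨0, by rintro _ ⟨m, rfl⟩; positivity⟩ n

lemma le_stableLength {g : Γ} {c : ℝ}
    (h : ∀ n : ℕ, c * (n + 1) ≤ displacement z0 (g ^ (n + 1))) : c ≤ stableLength z0 g :=
  le_ciInf fun n => (le_div_iff₀ (by positivity)).2 (h n)

lemma stableLength_nonneg (g : Γ) : 0 ≤ stableLength z0 g :=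
  le_ciInf fun _ => by positivity

lemma natCast_mul_stableLength_le (g : Γ) (n : ℕ) :
    n * stableLength z0 g ≤ displacement z0 (g ^ n) := by
  rcases n with _ | n
  · simp
  · have := stableLength_le_div z0 g n
    rw [le_div_iff₀ (by positivity)] at this
    push_cast
    linarith

variable [IsIsometricSMul Γ X]

lemma gp_smul (g : Γ) (x y z : X) : gp (g • x) (g • y) (g • z) = gp x y z := by
  simp only [gp, dist_smul]

lemma dist_smul_smul (g h : Γ) : dist (g • z0) (h • z0) = displacement z0 (g⁻¹ * h) := by
  rw [displacement, ← dist_smul g⁻¹, inv_smul_smul, mul_smul, dist_comm]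

lemma displacement_inv (g : Γ) : displacement z0 g⁻¹ = displacement z0 g := by
  rw [displacement, displacement, ← dist_smul g, smul_inv_smul, dist_comm]

lemma displacement_mul_le (g h : Γ) :
    displacement z0 (g * h) ≤ displacement z0 g + displacement z0 h := by
  have := dist_triangle ((g * h) • z0) (g • z0) z0
  rw [mul_smul, dist_smul] at this
  simp only [displacement, mul_smul]
  linarith

lemma displacement_sub_le_mul (g h : Γ) :
    displacement z0 g - displacement z0 h ≤ displacement z0 (g * h) := by
  have := displacement_mul_le z0 (g * h) h⁻¹
  rw [mul_inv_cancel_right, displacement_inv] at this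
  linarith

lemma displacement_pow_le (g : Γ) (n : ℕ) : displacement z0 (g ^ n) ≤ n * displacement z0 g := by
  induction n with
  | zero => simp
  | succ n ih =>
    rw [pow_succ]
    push_cast
    linarith [displacement_mul_le z0 (g ^ n) g]

lemma displacement_mul (g h : Γ) :
    displacement z0 (g * h) =
      displacement z0 g + displacement z0 h - 2 * gp z0 (g⁻¹ • z0) (h • z0) := by
  have hdist := dist_smul_smul z0 g⁻¹ h
  have hinv := displacement_inv z0 g
  rw [inv_inv] at hdist
  simp only [gp, displacement] at *
  linarith

lemma gp_mul_add_gp (g h : Γ) :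
    gp z0 ((g * h) • z0) (g • z0) + gp z0 (g⁻¹ • z0) (h • z0) = displacement z0 g := by
  have hmul := displacement_mul z0 g h
  have hdist := dist_smul_smul z0 (g * h) g
  rw [mul_inv_rev, inv_mul_cancel_right, displacement_inv] at hdist
  simp only [gp, displacement] at *
  linarith

variable {δ K : ℝ}

lemma isChain_orbit {u P : ℕ → Γ} {n : ℕ} (hP : ∀ t, P (t + 1) = P t * u t)
    (hgp : ∀ i, i + 2 ≤ n → gp z0 ((u i)⁻¹ • z0) (u (i + 1) • z0) ≤ K)
    (hdisp : ∀ i, i + 1 ≤ n → 2 * K + 4 * δ + 1 ≤ displacement z0 (u i)) :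
    IsChain δ K (fun t => P t • z0) n where
  gp_le i hi := by
    have h₁ : P i = P (i + 1) * (u i)⁻¹ := by rw [hP, mul_inv_cancel_right]
    have h₂ : P (i + 2) = P (i + 1) * u (i + 1) := hP (i + 1)
    simpa only [h₁, h₂, mul_smul, gp_smul] using hgp i hi
  le_dist i hi := by
    simpa only [dist_smul_smul, hP, inv_mul_cancel_left] using hdisp i hi

lemma sum_displacement_sub_le (hyp : HypWith δ X) {u P : ℕ → Γ} {n : ℕ} (hK : 0 ≤ K)
    (hP₀ : P 0 = 1) (hP : ∀ t, P (t + 1) = P t * u t)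
    (hgp : ∀ i, i + 2 ≤ n → gp z0 ((u i)⁻¹ • z0) (u (i + 1) • z0) ≤ K)
    (hdisp : ∀ i, i + 1 ≤ n → 2 * K + 4 * δ + 1 ≤ displacement z0 (u i)) :
    ∑ i ∈ Finset.range n, displacement z0 (u i) - 2 * n * (K + δ) ≤ displacement z0 (P n) := by
  have := (isChain_orbit z0 hP hgp hdisp).sum_dist_sub_le hyp hK le_rfl
  simpa only [dist_smul_smul, hP, inv_mul_cancel_left, hP₀, one_smul, dist_comm z0,
    displacement] using this

end Orbit

section PowerChain

variable {X : Type*} [MetricSpace X] {Γ : Type*} [Group Γ] [MulAction Γ X] {z0 : X} {δ M : ℝ}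

def ChainStep (z0 : X) (δ M : ℝ) (E : Γ) : Prop :=
  gp z0 (E⁻¹ • z0) (E • z0) ≤ M ∧ 2 * M + 4 * δ + 1 ≤ displacement z0 E

namespace ChainStep

variable {E : Γ}

lemma nonneg (h : ChainStep z0 δ M E) : 0 ≤ M := (gp_nonneg _ _ _).trans h.1

variable [IsIsometricSMul Γ X]

lemma inv (h : ChainStep z0 δ M E) : ChainStep z0 δ M E⁻¹ := by
  refine ⟨?_, ?_⟩
  · rw [inv_inv, gp_comm]; exact h.1
  · rw [displacement_inv]; exact h.2

lemma isChain (h : ChainStep z0 δ M E) (n : ℕ) : IsChain δ M (fun t => (E ^ t) • z0) n :=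
  isChain_orbit z0 (u := fun _ => E) (fun t => pow_succ E t) (fun _ _ => h.1) (fun _ _ => h.2)

lemma mul_le_displacement_pow (hyp : HypWith δ X) (h : ChainStep z0 δ M E) (n : ℕ) :
    n * (displacement z0 E - 2 * (M + δ)) ≤ displacement z0 (E ^ n) := by
  have := sum_displacement_sub_le z0 hyp h.nonneg (pow_zero E) (fun t => pow_succ E t)
    (n := n) (fun _ _ => h.1) (fun _ _ => h.2)
  simp only [Finset.sum_const, Finset.card_range, nsmul_eq_mul] at this
  linarith

lemma tendsto_displacement_pow (hyp : HypWith δ X) (h : ChainStep z0 δ M E) :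
    Tendsto (fun n : ℕ => displacement z0 (E ^ n)) atTop atTop := by
  refine tendsto_atTop_mono (fun n => ?_) tendsto_natCast_atTop_atTop
  have := h.mul_le_displacement_pow hyp n
  have : (n : ℝ) * 1 ≤ n * (displacement z0 E - 2 * (M + δ)) :=
    mul_le_mul_of_nonneg_left (by linarith [h.2, hyp.nonneg z0]) n.cast_nonneg
  linarith

lemma displacement_sub_le_gp (hyp : HypWith δ X) (h : ChainStep z0 δ M E) {n a : ℕ}
    (hna : n ≤ a) :
    displacement z0 (E ^ n) - (M + 2 * δ) ≤ gp z0 ((E ^ n) • z0) ((E ^ a) • z0) := by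
  have hM := h.nonneg
  have hδ := hyp.nonneg z0
  rcases Nat.eq_zero_or_pos n with rfl | hn
  · simp only [pow_zero, displacement_one, one_smul, gp_self_left]
    linarith
  rcases hna.eq_or_lt with rfl | hna
  · rw [gp_self_right]
    exact sub_le_self _ (by linarith)
  have hthin := (h.isChain a).gp_le_of_lt hyp hn hna le_rfl
  have := gp_add_gp ((E ^ n) • z0) z0 ((E ^ a) • z0)
  simp only [pow_zero, one_smul] at hthin
  rw [displacement]
  linarith

lemma displacement_sub_le_gp_pow (hyp : HypWith δ X) {e : Γ} {k₀ : ℕ} (hk₀ : k₀ ≠ 0)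
    (h : ChainStep z0 δ M (e ^ k₀)) {n k : ℕ} (hk : k₀ * n ≤ k) :
    displacement z0 ((e ^ k₀) ^ n) - (M + 2 * δ) - k₀ * displacement z0 e ≤
      gp z0 (((e ^ k₀) ^ n) • z0) ((e ^ k) • z0) := by
  have hdiv := Nat.div_add_mod k k₀
  have hna : n ≤ k / k₀ := (Nat.le_div_iff_mul_le (Nat.pos_of_ne_zero hk₀)).2 (by linarith)
  have hray := h.displacement_sub_le_gp hyp hna
  have hrest : ((e ^ k₀) ^ (k / k₀))⁻¹ * e ^ k = e ^ (k % k₀) := by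
    rw [← pow_mul, inv_mul_eq_iff_eq_mul, ← pow_add, hdiv]
  have hclose : dist (((e ^ k₀) ^ (k / k₀)) • z0) ((e ^ k) • z0) ≤ k₀ * displacement z0 e := by
    rw [dist_smul_smul, hrest]
    refine (displacement_pow_le z0 e _).trans ?_
    gcongr
    · exact displacement_nonneg z0 e
    · exact (Nat.mod_lt k (Nat.pos_of_ne_zero hk₀)).le
  linarith [gp_le_gp_add_dist z0 (((e ^ k₀) ^ n) • z0) ((e ^ k) • z0)
    (((e ^ k₀) ^ (k / k₀)) • z0), dist_comm (((e ^ k₀) ^ (k / k₀)) • z0) ((e ^ k) • z0)]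

end ChainStep

variable [IsIsometricSMul Γ X]

lemma eventually_gp_pow_le (hyp : HypWith δ X) {e f : Γ} {k₀ l₀ : ℕ} {M' M₁ : ℝ}
    (hk₀ : k₀ ≠ 0) (he : ChainStep z0 δ M (e ^ k₀)) (hl₀ : l₀ ≠ 0)
    (hf : ChainStep z0 δ M' (f ^ l₀))
    (hef : ∃ᶠ k in atTop, gp z0 ((e ^ k) • z0) ((f ^ k) • z0) ≤ M₁) :
    ∀ᶠ N in atTop, gp z0 (((e ^ k₀) ^ N) • z0) (((f ^ l₀) ^ N) • z0) ≤ M₁ + 2 * δ := by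
  filter_upwards [(he.tendsto_displacement_pow hyp).eventually_gt_atTop
      (M₁ + 2 * δ + (M + 2 * δ) + k₀ * displacement z0 e),
    (hf.tendsto_displacement_pow hyp).eventually_gt_atTop
      (M₁ + 2 * δ + (M' + 2 * δ) + l₀ * displacement z0 f)] with N hEN hFN
  obtain ⟨k, hk, hkN⟩ := (hef.and_eventually (eventually_ge_atTop (k₀ * N + l₀ * N))).exists
  have hE := he.displacement_sub_le_gp_pow hyp hk₀ (n := N) (k := k) (by omega)
  have hF := hf.displacement_sub_le_gp_pow hyp hl₀ (n := N) (k := k) (by omega)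
  have hδ := hyp.nonneg z0
  have h₁ := hyp.gp_le_of_lt hk (by linarith : M₁ + δ < gp z0 (((f ^ l₀) ^ N) • z0) ((f ^ k) • z0))
  have h₂ := hyp.gp_le_of_lt h₁
    (by linarith : M₁ + δ + δ < gp z0 (((e ^ k₀) ^ N) • z0) ((e ^ k) • z0))
  linarith

end PowerChain

section PingPong

variable {X : Type*} [MetricSpace X] {Γ : Type*} [Group Γ] [MulAction Γ X]
  [IsIsometricSMul Γ X] {z0 : X} {δ : ℝ}

/-- The orbit of the periodic word `w s w s ⋯` is a chain. -/
lemma displacement_add_sub_le_stableLength_mul (hyp : HypWith δ X) {w s : Γ} {C : ℝ}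
    (hws : gp z0 (w⁻¹ • z0) (s • z0) ≤ C) (hsw : gp z0 (w • z0) (s⁻¹ • z0) ≤ C)
    (hw : 2 * C + 4 * δ + 1 ≤ displacement z0 w) (hs : 2 * C + 4 * δ + 1 ≤ displacement z0 s) :
    displacement z0 w + displacement z0 s - 4 * (C + δ) ≤ stableLength z0 (w * s) := by
  set u : ℕ → Γ := fun t => if t % 2 = 0 then w else s
  set P : ℕ → Γ := fun t => (w * s) ^ (t / 2) * w ^ (t % 2)
  have hP : ∀ t, P (t + 1) = P t * u t := by
    intro t
    rcases Nat.even_or_odd' t with ⟨a, rfl | rfl⟩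
    · simp [P, u, Nat.add_mod, Nat.add_div]
    · have e₁ : (2 * a + 1 + 1) / 2 = a + 1 := by omega
      have e₂ : (2 * a + 1) / 2 = a := by omega
      simp [P, u, e₁, e₂, Nat.add_mod, pow_succ, mul_assoc]
  have hgp : ∀ i, gp z0 ((u i)⁻¹ • z0) (u (i + 1) • z0) ≤ C := by
    intro i
    rcases Nat.mod_two_eq_zero_or_one i with hi | hi
    · simpa [u, hi, Nat.add_mod] using hws
    · simpa [u, hi, Nat.add_mod, gp_comm] using hsw
  have hdisp : ∀ i, 2 * C + 4 * δ + 1 ≤ displacement z0 (u i) := by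
    intro i
    simp only [u]
    split_ifs
    exacts [hw, hs]
  have hsum : ∀ m : ℕ, ∑ i ∈ Finset.range (2 * m), displacement z0 (u i) =
      m * (displacement z0 w + displacement z0 s) := by
    intro m
    induction m with
    | zero => simp
    | succ m ih =>
      rw [show 2 * (m + 1) = 2 * m + 1 + 1 by ring, Finset.sum_range_succ, Finset.sum_range_succ,
        ih]
      simp [u, Nat.add_mod]
      ring
  refine le_stableLength z0 fun n => ?_
  have hchain := sum_displacement_sub_le z0 hyp (n := 2 * (n + 1)) ((gp_nonneg _ _ _).trans hws)
    (by simp [P]) hP (fun i _ => hgp i) (fun i _ => hdisp i)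
  rw [hsum] at hchain
  have hPn : P (2 * (n + 1)) = (w * s) ^ (n + 1) := by simp [P]
  rw [hPn] at hchain
  push_cast at hchain
  linarith

/-- `(G * H) • z0` lies in the direction of `G • z0`, and `(H * G) • z0` in that of `H • z0`. -/
lemma gp_mul_le_of_gp_le (hyp : HypWith δ X) {G H : Γ} {A : ℝ}
    (hGH : gp z0 (G • z0) (H • z0) ≤ A) (hGiH : gp z0 (G⁻¹ • z0) (H • z0) ≤ A)
    (hHiG : gp z0 (H⁻¹ • z0) (G • z0) ≤ A)
    (hG : 2 * A + 2 * δ < displacement z0 G) (hH : 2 * A + 2 * δ < displacement z0 H) :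
    gp z0 (G • z0) ((H * G) • z0) ≤ A + δ ∧ gp z0 ((G * H) • z0) (H • z0) ≤ A + δ ∧
      gp z0 ((G * H) • z0) ((H * G) • z0) ≤ A + 2 * δ := by
  have hδ := hyp.nonneg z0
  have hGHG : displacement z0 G - A ≤ gp z0 ((G * H) • z0) (G • z0) := by
    linarith [gp_mul_add_gp z0 G H]
  have hHGH : displacement z0 H - A ≤ gp z0 ((H * G) • z0) (H • z0) := by
    linarith [gp_mul_add_gp z0 H G]
  have h₁ := hyp.gp_le_of_lt hGH (by linarith : A + δ < gp z0 ((H * G) • z0) (H • z0))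
  have h₂ := hyp.gp_le_of_lt (by rwa [gp_comm] at hGH : gp z0 (H • z0) (G • z0) ≤ A)
    (by linarith : A + δ < gp z0 ((G * H) • z0) (G • z0))
  have h₃ := hyp.gp_le_of_lt h₁ (by linarith : A + δ + δ < gp z0 ((G * H) • z0) (G • z0))
  refine ⟨by rwa [gp_comm], h₂, by linarith⟩

/-- Ping-pong: the forward directions of `G, G * H` and of `H, H * G` are separated, as are the
backward directions of `G, H * G` and of `H, G * H`, so some `s` avoids both directions of `w`. -/
lemma exists_mem_gp_le (hyp : HypWith δ X) {G H : Γ} {A : ℝ}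
    (hA : ∀ s t : Bool, gp z0 ((cond s G G⁻¹) • z0) ((cond t H H⁻¹) • z0) ≤ A)
    (hG : 2 * A + 2 * δ < displacement z0 G) (hH : 2 * A + 2 * δ < displacement z0 H) (w : Γ) :
    ∃ s ∈ ({G, H, G * H, H * G} : Set Γ),
      gp z0 (w⁻¹ • z0) (s • z0) ≤ A + 3 * δ ∧ gp z0 (w • z0) (s⁻¹ • z0) ≤ A + 3 * δ := by
  have hGH : gp z0 (G • z0) (H • z0) ≤ A := hA true true
  have hGH' : gp z0 (G • z0) (H⁻¹ • z0) ≤ A := hA true false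
  have hG'H : gp z0 (G⁻¹ • z0) (H • z0) ≤ A := hA false true
  have hG'H' : gp z0 (G⁻¹ • z0) (H⁻¹ • z0) ≤ A := hA false false
  obtain ⟨f₁, f₂, f₃⟩ := gp_mul_le_of_gp_le hyp hGH hG'H (by rwa [gp_comm] at hGH') hG hH
  obtain ⟨b₁, b₂, b₃⟩ := gp_mul_le_of_gp_le hyp (z0 := z0) (G := H⁻¹) (H := G⁻¹) (A := A)
    (by rwa [gp_comm] at hG'H') (by rwa [inv_inv, gp_comm]) (by rwa [inv_inv])
    (by rwa [displacement_inv]) (by rwa [displacement_inv])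
  simp only [← mul_inv_rev] at b₁ b₂ b₃
  rw [gp_comm] at b₁ b₂ b₃
  have hδ := hyp.nonneg z0
  have fwd := hyp.gp_le_or_gp_le (p := z0) (C := A + 3 * δ) (u₁ := G • z0)
    (u₂ := (G * H) • z0) (v₁ := H • z0) (v₂ := (H * G) • z0)
    (by linarith) (by linarith) (by linarith) (by linarith) (w⁻¹ • z0)
  have bwd := hyp.gp_le_or_gp_le (p := z0) (C := A + 3 * δ) (u₁ := G⁻¹ • z0)
    (u₂ := (H * G)⁻¹ • z0) (v₁ := H⁻¹ • z0) (v₂ := (G * H)⁻¹ • z0)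
    (by linarith) (by linarith) (by linarith) (by linarith) (w • z0)
  simp only [Set.mem_insert_iff, Set.mem_singleton_iff, exists_eq_or_imp, exists_eq_left]
  rcases fwd with ⟨hG₁, hGH₁⟩ | ⟨hH₁, hHG₁⟩ <;> rcases bwd with ⟨hG₂, hHG₂⟩ | ⟨hH₂, hGH₂⟩
  · exact .inl ⟨hG₁, hG₂⟩
  · exact .inr (.inr (.inl ⟨hGH₁, hGH₂⟩))
  · exact .inr (.inr (.inr ⟨hHG₁, hHG₂⟩))
  · exact .inr (.inl ⟨hH₁, hH₂⟩)

lemma exists_stableLength_mul_ge_of_gp_le (hyp : HypWith δ X) {G H : Γ} {A : ℝ}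
    (hA : ∀ s t : Bool, gp z0 ((cond s G G⁻¹) • z0) ((cond t H H⁻¹) • z0) ≤ A)
    (hG : 4 * A + 10 * δ + 1 ≤ displacement z0 G) (hH : 4 * A + 10 * δ + 1 ≤ displacement z0 H)
    {w : Γ} (hw : 2 * A + 10 * δ + 1 ≤ displacement z0 w) :
    ∃ s ∈ ({G, H, G * H, H * G} : Set Γ),
      displacement z0 w - 4 * (A + 4 * δ) ≤ stableLength z0 (w * s) := by
  have hA₀ : 0 ≤ A := (gp_nonneg _ _ _).trans (hA true true)
  have hδ := hyp.nonneg z0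
  obtain ⟨s, hs, hws, hsw⟩ := exists_mem_gp_le hyp hA (by linarith) (by linarith) w
  have hds : 2 * (A + 3 * δ) + 4 * δ + 1 ≤ displacement z0 s := by
    have hG'H : gp z0 (G⁻¹ • z0) (H • z0) ≤ A := hA false true
    have hH'G : gp z0 (H⁻¹ • z0) (G • z0) ≤ A := by rw [gp_comm]; exact hA true false
    simp only [Set.mem_insert_iff, Set.mem_singleton_iff] at hs
    rcases hs with rfl | rfl | rfl | rfl
    · linarith
    · linarith
    · rw [displacement_mul]; linarith
    · rw [displacement_mul]; linarith
  refine ⟨s, hs, ?_⟩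
  have := displacement_add_sub_le_stableLength_mul hyp hws hsw (by linarith) hds
  linarith [displacement_nonneg z0 s]

end PingPong

section NonElementary

variable {X : Type*} [MetricSpace X] {Γ : Type*} [Group Γ] [MulAction Γ X] {z0 : X} {δ : ℝ}

lemma exists_pow_mem_of_mem_closure {B : Set Γ} {g : Γ} (hg : g ∈ Subsemigroup.closure B) :
    ∃ n : ℕ, g ∈ B ^ n := by
  induction hg using Subsemigroup.closure_induction with
  | mem g hg => exact ⟨1, by rwa [pow_one]⟩
  | mul g h _ _ ihg ihh =>
    obtain ⟨m, hm⟩ := ihg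
    obtain ⟨n, hn⟩ := ihh
    exact ⟨m + n, by rw [pow_add]; exact Set.mul_mem_mul hm hn⟩

lemma raySeq_eq (g : Γ) (s : Bool) (n : ℕ) : raySeq z0 g s n = (cond s g g⁻¹ ^ n) • z0 := by
  cases s <;> simp [raySeq, inv_pow]

lemma exists_frequently_gp_le_of_not_sameEnd {u v : ℕ → X} (h : ¬ SameEnd z0 u v) :
    ∃ M, ∃ᶠ k in atTop, gp z0 (u k) (v k) ≤ M := by
  simp only [SameEnd, tendsto_atTop, not_forall, not_eventually, not_le] at h
  obtain ⟨M, hM⟩ := h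
  exact ⟨M, hM.mono fun _ => le_of_lt⟩

variable [IsIsometricSMul Γ X]

lemma IsLoxodromic.tendsto_displacement_pow {g : Γ} (hg : IsLoxodromic X g) (z0 : X) :
    Tendsto (fun n : ℕ => displacement z0 (g ^ n)) atTop atTop := by
  obtain ⟨x, lam, C, hlam, -, hq⟩ := hg
  have hlower : ∀ n : ℕ, lam⁻¹ * n + -(C + 2 * dist x z0) ≤ displacement z0 (g ^ n) := by
    intro n
    have h₁ := (hq n 0).1
    simp only [zpow_natCast, zpow_zero, one_smul, Int.cast_natCast, Int.cast_zero, sub_zero,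
      abs_of_nonneg (Nat.cast_nonneg (α := ℝ) n)] at h₁
    have h₂ := dist_triangle4 ((g ^ n) • x) ((g ^ n) • z0) z0 x
    rw [dist_smul] at h₂
    rw [displacement]
    linarith [dist_comm z0 x]
  refine tendsto_atTop_mono hlower (tendsto_atTop_add_const_right _ _ ?_)
  exact tendsto_natCast_atTop_atTop.const_mul_atTop (inv_pos.2 (by linarith))

lemma exists_chainStep_pow {g : Γ} (hg : IsLoxodromic X g)
    (hsep : ¬ SameEnd z0 (raySeq z0 g true) (raySeq z0 g false)) :
    ∃ (k₀ : ℕ) (M : ℝ), k₀ ≠ 0 ∧ ChainStep z0 δ M (g ^ k₀) := by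
  obtain ⟨M, hM⟩ := exists_frequently_gp_le_of_not_sameEnd hsep
  obtain ⟨k, hk, hdisp, hk₀⟩ := (hM.and_eventually
    (((hg.tendsto_displacement_pow z0).eventually_ge_atTop (2 * M + 4 * δ + 1)).and
      (eventually_ne_atTop 0))).exists
  refine ⟨k, M, hk₀, ?_, hdisp⟩
  rw [raySeq_eq, raySeq_eq, gp_comm] at hk
  simpa [inv_pow] using hk

/-- `G` and `H` are high powers of two independent loxodromics; `A` does not depend on the
power. -/
lemma NonElementarySet.exists_gp_le (hyp : HypWith δ X) {B : Set Γ}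
    (hne : NonElementarySet z0 B) :
    ∃ A : ℝ, ∀ Λ : ℝ, ∃ (G H : Γ) (p q : ℕ), G ∈ B ^ p ∧ H ∈ B ^ q ∧
      Λ ≤ displacement z0 G ∧ Λ ≤ displacement z0 H ∧
      ∀ s t : Bool, gp z0 ((cond s G G⁻¹) • z0) ((cond t H H⁻¹) • z0) ≤ A := by
  obtain ⟨g, h, hgB, hhB, hlg, hlh, hsepg, hseph, hindep⟩ := hne
  obtain ⟨p, hp⟩ := exists_pow_mem_of_mem_closure hgB
  obtain ⟨q, hq⟩ := exists_pow_mem_of_mem_closure hhB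
  obtain ⟨k₀, Mg, hk₀, hg⟩ := exists_chainStep_pow (δ := δ) hlg hsepg
  obtain ⟨l₀, Mh, hl₀, hh⟩ := exists_chainStep_pow (δ := δ) hlh hseph
  have hgs : ∀ s, ChainStep z0 δ Mg (cond s g g⁻¹ ^ k₀) := by
    rintro (_ | _)
    · simpa [inv_pow] using hg.inv
    · exact hg
  have hhs : ∀ t, ChainStep z0 δ Mh (cond t h h⁻¹ ^ l₀) := by
    rintro (_ | _)
    · simpa [inv_pow] using hh.inv
    · exact hh
  have hmix : ∀ s t : Bool, ∃ A, ∀ᶠ N in atTop,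
      gp z0 (((cond s g g⁻¹ ^ k₀) ^ N) • z0) (((cond t h h⁻¹ ^ l₀) ^ N) • z0) ≤ A := by
    intro s t
    obtain ⟨M, hM⟩ := exists_frequently_gp_le_of_not_sameEnd (hindep s t)
    simp only [raySeq_eq] at hM
    exact ⟨_, eventually_gp_pow_le hyp hk₀ (hgs s) hl₀ (hhs t) hM⟩
  choose A hA using hmix
  obtain ⟨A₀, hA₀⟩ := Finite.exists_le fun st : Bool × Bool => A st.1 st.2
  refine ⟨A₀, fun Λ => ?_⟩
  have hcross : ∀ᶠ N in atTop, ∀ s t : Bool,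
      gp z0 (((cond s g g⁻¹ ^ k₀) ^ N) • z0) (((cond t h h⁻¹ ^ l₀) ^ N) • z0) ≤ A₀ :=
    eventually_all.2 fun s => eventually_all.2 fun t =>
      (hA s t).mono fun _ hN => hN.trans (hA₀ (s, t))
  obtain ⟨N, hN, hGΛ, hHΛ⟩ := (hcross.and
    ((hg.tendsto_displacement_pow hyp |>.eventually_ge_atTop Λ).and
      (hh.tendsto_displacement_pow hyp |>.eventually_ge_atTop Λ))).exists
  refine ⟨(g ^ k₀) ^ N, (h ^ l₀) ^ N, p * k₀ * N, q * l₀ * N, ?_, ?_, hGΛ, hHΛ, fun s t => ?_⟩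
  · rw [pow_mul, pow_mul]; exact Set.pow_mem_pow (Set.pow_mem_pow hp)
  · rw [pow_mul, pow_mul]; exact Set.pow_mem_pow (Set.pow_mem_pow hq)
  · have := hN s t
    cases s <;> cases t <;> simpa [inv_pow] using this

theorem NonElementarySet.exists_le_stableLength_mul (hyp : HypWith δ X) {B : Set Γ}
    (hne : NonElementarySet z0 B) :
    ∃ (m : ℕ) (c r : ℝ), ∀ w : Γ, r ≤ displacement z0 w →
      ∃ s : Γ, ∃ j ≤ m, s ∈ B ^ j ∧ displacement z0 w - c ≤ stableLength z0 (w * s) := by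
  obtain ⟨A, hA⟩ := hne.exists_gp_le hyp
  obtain ⟨G, H, p, q, hG, hH, hGΛ, hHΛ, hGH⟩ := hA (4 * A + 10 * δ + 1)
  refine ⟨p + q, 4 * (A + 4 * δ), 2 * A + 10 * δ + 1, fun w hw => ?_⟩
  obtain ⟨s, hs, hws⟩ := exists_stableLength_mul_ge_of_gp_le hyp hGH hGΛ hHΛ hw
  have hmem : ∃ j ≤ p + q, s ∈ B ^ j := by
    simp only [Set.mem_insert_iff, Set.mem_singleton_iff] at hs
    rcases hs with rfl | rfl | rfl | rfl
    · exact ⟨p, by omega, hG⟩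
    · exact ⟨q, by omega, hH⟩
    · exact ⟨p + q, le_rfl, by rw [pow_add]; exact Set.mul_mem_mul hG hH⟩
    · exact ⟨q + p, by omega, by rw [pow_add]; exact Set.mul_mem_mul hH hG⟩
  obtain ⟨j, hj, hsj⟩ := hmem
  exact ⟨s, j, hj, hsj, hws⟩

end NonElementary

section Asymptotics

lemma ofReal_le_div_natCast {x : ℝ} {u : ENNReal} {n : ℕ} (hn : n ≠ 0)
    (h : ENNReal.ofReal (x * n) ≤ u) : ENNReal.ofReal x ≤ u / n := by
  rwa [ENNReal.le_div_iff_mul_le (.inl (by exact_mod_cast hn)) (.inl (ENNReal.natCast_ne_top n)),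
    ← ENNReal.ofReal_natCast, ← ENNReal.ofReal_mul' n.cast_nonneg]

variable {α : Type*} {S : Set α} {F : α → ℝ} {n : ℕ}

lemma ofReal_le_iSup_div {a : α} (ha : a ∈ S) {x : ℝ} (hn : n ≠ 0) (h : x * n ≤ F a) :
    ENNReal.ofReal x ≤ (⨆ b ∈ S, ENNReal.ofReal (F b)) / n :=
  ofReal_le_div_natCast hn <| (ENNReal.ofReal_le_ofReal h).trans <|
    le_iSup₂ (f := fun b _ => ENNReal.ofReal (F b)) a ha

lemma iSup_div_le (hn : n ≠ 0) {c : ENNReal} (h : ∀ a ∈ S, ENNReal.ofReal (F a / n) ≤ c) :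
    (⨆ a ∈ S, ENNReal.ofReal (F a)) / n ≤ c := by
  simp only [ENNReal.iSup_div]
  refine iSup₂_le fun a ha => ?_
  rw [← ENNReal.ofReal_natCast, ← ENNReal.ofReal_div_of_pos (by positivity)]
  exact h a ha

lemma exists_lt_of_ofReal_lt_iSup_div {x : ℝ} (hn : n ≠ 0)
    (h : ENNReal.ofReal x < (⨆ a ∈ S, ENNReal.ofReal (F a)) / n) : ∃ a ∈ S, x * n < F a := by
  rw [ENNReal.lt_div_iff_mul_lt (.inl (by exact_mod_cast hn)) (.inl (ENNReal.natCast_ne_top n)),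
    ← ENNReal.ofReal_natCast, ← ENNReal.ofReal_mul' n.cast_nonneg] at h
  simp only [lt_iSup_iff] at h
  obtain ⟨a, ha, hlt⟩ := h
  exact ⟨a, ha, ((ENNReal.ofReal_lt_ofReal_iff').1 hlt).1⟩

lemma ofReal_le_limsup_div {u : ℕ → ENNReal} {r c : ℝ} {m : ℕ}
    (h : ∃ᶠ k : ℕ in atTop, ∃ j ≤ m, ENNReal.ofReal (r * k - c) ≤ u (k + j)) :
    ENNReal.ofReal r ≤ limsup (fun k => u k / k) atTop := by
  refine le_of_forall_lt_imp_le_of_dense fun b hb => ?_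
  obtain ⟨ρ, rfl⟩ : ∃ ρ, b = ENNReal.ofReal ρ := ⟨b.toReal, (ENNReal.ofReal_toReal hb.ne_top).symm⟩
  have hρr : ρ < r := ((ENNReal.ofReal_lt_ofReal_iff').1 hb).1
  rcases le_or_gt ρ 0 with hρ | hρ
  · simp [ENNReal.ofReal_of_nonpos hρ]
  have hev : ∀ᶠ k : ℕ in atTop, ρ * (k + m) ≤ r * k - c := by
    filter_upwards [tendsto_natCast_atTop_atTop.eventually_ge_atTop ((c + ρ * m) / (r - ρ))]
      with k hk
    rw [div_le_iff₀ (by linarith)] at hk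
    linarith
  refine le_limsup_of_frequently_le (frequently_atTop.2 fun a => ?_) (by isBoundedDefault)
  obtain ⟨k, hka, ⟨j, hj, hu⟩, hk⟩ := frequently_atTop.1 (h.and_eventually
    (hev.and (eventually_ne_atTop 0))) a
  refine ⟨k + j, by omega, ofReal_le_div_natCast (by omega) ?_⟩
  refine le_trans (ENNReal.ofReal_le_ofReal ?_) hu
  have : ((k + j : ℕ) : ℝ) ≤ k + m := by exact_mod_cast (by omega : k + j ≤ k + m)
  nlinarith [hk.1]

end Asymptotics

section BergerWang

variable {X : Type*} [MetricSpace X] {Γ : Type*} [Group Γ] [MulAction Γ X] {z0 : X}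
  {B : Set Γ}

theorem ofReal_stableLength_div_le_liminf [IsIsometricSMul Γ X] {a : Γ} {k : ℕ} (hk : k ≠ 0)
    (ha : a ∈ B ^ k) :
    ENNReal.ofReal (stableLength z0 a / k) ≤ liminf (fun n : ℕ => dispSup z0 B n / n) atTop := by
  obtain ⟨b, hb⟩ : B.Nonempty :=
    Set.nonempty_iff_ne_empty.2 fun hB => by simp [hB, Set.empty_pow hk] at ha
  set ℓ := stableLength z0 a
  set β := displacement z0 b
  have hℓ : 0 ≤ ℓ := stableLength_nonneg z0 a
  have hβ : 0 ≤ β := displacement_nonneg z0 b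
  have hkpos : (0 : ℝ) < k := by positivity
  have hbound : ∀ n : ℕ, n ≠ 0 →
      ENNReal.ofReal (ℓ / k - (ℓ + k * β) / n) ≤ dispSup z0 B n / n := by
    intro n hn
    have hmem : a ^ (n / k) * b ^ (n % k) ∈ B ^ n := by
      have := Set.mul_mem_mul (Set.pow_mem_pow (n := n / k) ha) (Set.pow_mem_pow (n := n % k) hb)
      rwa [← pow_mul, ← pow_add, Nat.div_add_mod] at this
    refine ofReal_le_iSup_div hmem hn ?_
    have h₁ := displacement_sub_le_mul z0 (a ^ (n / k)) (b ^ (n % k))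
    have h₂ := natCast_mul_stableLength_le z0 a (n / k)
    have h₃ := displacement_pow_le z0 b (n % k)
    have hmod : ((n % k : ℕ) : ℝ) ≤ k := by
      exact_mod_cast (Nat.mod_lt n (Nat.pos_of_ne_zero hk)).le
    have hdiv : (n : ℝ) ≤ k * (n / k : ℕ) + k := by
      have := Nat.div_add_mod n k
      have := Nat.mod_lt n (Nat.pos_of_ne_zero hk)
      exact_mod_cast (by omega : n ≤ k * (n / k) + k)
    have hℓn : ℓ * n / k ≤ ℓ * (n / k : ℕ) + ℓ := by
      rw [div_le_iff₀ hkpos]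
      nlinarith
    have hnpos : (0 : ℝ) < n := by positivity
    calc (ℓ / k - (ℓ + k * β) / n) * n = ℓ * n / k - ℓ - k * β := by field_simp; ring
      _ ≤ (n / k : ℕ) * ℓ - (n % k : ℕ) * β := by nlinarith
      _ ≤ displacement z0 (a ^ (n / k) * b ^ (n % k)) := by linarith
  have hlim : Tendsto (fun n : ℕ => ENNReal.ofReal (ℓ / k - (ℓ + k * β) / n)) atTop
      (𝓝 (ENNReal.ofReal (ℓ / k))) :=
    ENNReal.tendsto_ofReal <| by
      simpa using tendsto_const_nhds.sub (tendsto_const_div_atTop_nhds_zero_nat (ℓ + k * β))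
  calc ENNReal.ofReal (ℓ / k)
      = liminf (fun n : ℕ => ENNReal.ofReal (ℓ / k - (ℓ + k * β) / n)) atTop :=
        hlim.liminf_eq.symm
    _ ≤ liminf (fun n : ℕ => dispSup z0 B n / n) atTop :=
        liminf_le_liminf ((eventually_ne_atTop 0).mono hbound)

theorem limsup_dispSup_div_le
    (hkey : ∃ (m : ℕ) (c r : ℝ), ∀ w : Γ, r ≤ displacement z0 w →
      ∃ s : Γ, ∃ j ≤ m, s ∈ B ^ j ∧ displacement z0 w - c ≤ stableLength z0 (w * s)) :
    limsup (fun n : ℕ => dispSup z0 B n / n) atTop ≤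
      limsup (fun k : ℕ => (⨆ g ∈ B ^ k, ENNReal.ofReal (stableLength z0 g)) / k) atTop := by
  obtain ⟨m, c, r₀, hkey⟩ := hkey
  refine ENNReal.le_of_forall_pos_nnreal_lt fun r hr hrL => ?_
  rw [← ENNReal.ofReal_coe_nnreal] at hrL ⊢
  refine ofReal_le_limsup_div (m := m) (c := c) ?_
  have hev : ∀ᶠ k : ℕ in atTop, r₀ ≤ r * k ∧ k ≠ 0 :=
    ((tendsto_natCast_atTop_atTop.const_mul_atTop (by exact_mod_cast hr : (0 : ℝ) < r)
      ).eventually_ge_atTop r₀).and (eventually_ne_atTop 0)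
  refine ((frequently_lt_of_lt_limsup (by isBoundedDefault) hrL).and_eventually hev).mono ?_
  rintro k ⟨hk, hr₀, hk₀⟩
  obtain ⟨w, hw, hwk⟩ : ∃ w ∈ B ^ k, (r : ℝ) * k < displacement z0 w :=
    exists_lt_of_ofReal_lt_iSup_div hk₀ hk
  obtain ⟨s, j, hj, hs, hws⟩ := hkey w (hr₀.trans hwk.le)
  refine ⟨j, hj, (ENNReal.ofReal_le_ofReal (by linarith [hwk, hws])).trans
    (le_iSup₂_of_le (f := fun g (_ : g ∈ B ^ (k + j)) => ENNReal.ofReal (stableLength z0 g))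
      (w * s) ?_ le_rfl)⟩
  rw [pow_add]
  exact Set.mul_mem_mul hw hs

end BergerWang

theorem geometric_berger_wang_general
    {X : Type*} [MetricSpace X] {Γ : Type*} [Group Γ] [MulAction Γ X]
    (hiso : IsIsomAction Γ X) (hhyp : GromovHyperbolic X)
    (z0 : X) (B : Set Γ) (hne : NonElementarySet z0 B) :
    ∃ L : ENNReal,
      Tendsto (fun n : ℕ => dispSup z0 B n / n) atTop (𝓝 L) ∧
      limsup (fun k : ℕ =>
        (⨆ g ∈ B ^ k, ENNReal.ofReal (stableLength z0 g)) / k) atTop = L := by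
  have := hiso.isIsometricSMul
  obtain ⟨δ, -, hyp⟩ := hhyp
  set D := fun n : ℕ => dispSup z0 B n / n
  set S := fun k : ℕ => (⨆ g ∈ B ^ k, ENNReal.ofReal (stableLength z0 g)) / k
  have hSD : limsup S atTop ≤ liminf D atTop :=
    limsup_le_of_le (by isBoundedDefault) <| (eventually_ne_atTop 0).mono fun k hk =>
      iSup_div_le hk fun a ha => ofReal_stableLength_div_le_liminf hk ha
  have hDS : limsup D atTop ≤ limsup S atTop :=
    limsup_dispSup_div_le (hne.exists_le_stableLength_mul hyp)
  have hD : liminf D atTop ≤ limsup D atTop := liminf_le_limsup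
  exact ⟨limsup D atTop, tendsto_of_liminf_eq_limsup (by order) rfl, by order⟩

/-- **Lemma (geometric Berger–Wang equality).** For a non-elementary subset `B` of
isometries of a geodesic Gromov-hyperbolic space, `ℓ_∞(B) = ℓ(B)` where
`ℓ_∞(B) = limsup_k sup_{g ∈ B^k} ℓ(g)/k`. -/
theorem geometric_berger_wang
    {X : Type*} [MetricSpace X] {Γ : Type*} [Group Γ] [MulAction Γ X]
    (hiso : IsIsomAction Γ X) (hgeo : GeodesicSpace X) (hhyp : GromovHyperbolic X)
    (z0 : X) (B : Set Γ) (hne : NonElementarySet z0 B) :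
    ∃ L : ENNReal,
      Tendsto (fun n : ℕ => dispSup z0 B n / n) atTop (𝓝 L) ∧
      limsup (fun k : ℕ =>
        (⨆ g ∈ B ^ k, ENNReal.ofReal (stableLength z0 g)) / k) atTop = L :=
  geometric_berger_wang_general hiso hhyp z0 B hne

end BMS
end
end
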